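/- Let A, B, C, X, Y, Z, E, W be random variables on a common finite discrete probability space, each taking values in a finite set, satisfying: (i) I(X;Y;Z|(E,W)) = 0 (the inputs are conditionally uncorrelated given E and W); (ii) I((Y,Z);A|(X,E,W)) = 0, I((X,Z);B|(Y,E,W)) = 0, and I((X,Y);C|(Z,E,W)) = 0 (no-signaling of each output from the other parties' inputs). Then I((A,X);(B,Y);(C,Z)|(E,W)) = I(A;B;C|(X,Y,Z,E,W)). -/
import Mathlib


noncomputable def prob {Ω : Type*} [Fintype Ω] (μ : Ω → ℝ) (P : Ω → Prop) [DecidablePred P] : ℝ :=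
  ∑ ω ∈ Finset.univ.filter P, μ ω

/-- Shannon entropy (base 2) of a random variable `X` on a finite discrete
probability space with probability mass function `μ`. -/
noncomputable def entropy {Ω S : Type*} [Fintype Ω] [Fintype S] [DecidableEq S]
    (μ : Ω → ℝ) (X : Ω → S) : ℝ :=
  -∑ s : S, prob μ (fun ω => X ω = s) * Real.logb 2 (prob μ (fun ω => X ω = s))

/-- Conditional entropy `H(X|Y) = H(X,Y) - H(Y)`. -/
noncomputable def condEntropy {Ω S T : Type*} [Fintype Ω] [Fintype S] [DecidableEq S]
    [Fintype T] [DecidableEq T] (μ : Ω → ℝ) (X : Ω → S) (Y : Ω → T) : ℝ :=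
  entropy μ (fun ω => (X ω, Y ω)) - entropy μ Y

/-- Conditional mutual information `I(X;Y|Z) = H(X|Z) + H(Y|Z) - H(X,Y|Z)`. -/
noncomputable def condMutualInfo {Ω S T U : Type*} [Fintype Ω] [Fintype S] [DecidableEq S]
    [Fintype T] [DecidableEq T] [Fintype U] [DecidableEq U]
    (μ : Ω → ℝ) (X : Ω → S) (Y : Ω → T) (Z : Ω → U) : ℝ :=
  condEntropy μ X Z + condEntropy μ Y Z - condEntropy μ (fun ω => (X ω, Y ω)) Z

/-- Conditional total correlation of three random variables:
`I(A;B;C|E) = H(A|E) + H(B|E) + H(C|E) - H(A,B,C|E)`. -/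
noncomputable def condTotalCorr3 {Ω S T U V : Type*} [Fintype Ω] [Fintype S] [DecidableEq S]
    [Fintype T] [DecidableEq T] [Fintype U] [DecidableEq U] [Fintype V] [DecidableEq V]
    (μ : Ω → ℝ) (A : Ω → S) (B : Ω → T) (C : Ω → U) (E : Ω → V) : ℝ :=
  condEntropy μ A E + condEntropy μ B E + condEntropy μ C E -
    condEntropy μ (fun ω => (A ω, B ω, C ω)) E

/-- Conditional total correlation `I(A_1;⋯;A_M|E) = ∑ᵢ H(Aᵢ|E) - H(A_1,…,A_M|E)`. -/
noncomputable def condTotalCorr {Ω : Type*} [Fintype Ω] {M : ℕ} {S : Fin M → Type*}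
    [∀ i, Fintype (S i)] [∀ i, DecidableEq (S i)] {T : Type*} [Fintype T] [DecidableEq T]
    (μ : Ω → ℝ) (A : ∀ i, Ω → S i) (E : Ω → T) : ℝ :=
  (∑ i, condEntropy μ (A i) E) - condEntropy μ (fun ω i => A i ω) E

lemma prob_congr {Ω : Type*} [Fintype Ω] (μ : Ω → ℝ) (P Q : Ω → Prop)
    [DecidablePred P] [DecidablePred Q] (h : ∀ ω, P ω ↔ Q ω) : prob μ P = prob μ Q := by
  unfold prob
  congr 1
  exact Finset.filter_congr (fun ω _ => h ω)

lemma entropy_eq_of_inj {Ω S T : Type*} [Fintype Ω] [Fintype S] [DecidableEq S]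
    [Fintype T] [DecidableEq T] (μ : Ω → ℝ) (X : Ω → S) (Y : Ω → T)
    (g : S → T) (hg : Function.Injective g) (h : ∀ ω, Y ω = g (X ω)) :
    entropy μ Y = entropy μ X := by
  unfold entropy
  congr 1
  have hz : ∀ t ∈ Finset.univ, t ∉ Finset.univ.image g →
      prob μ (fun ω => Y ω = t) * Real.logb 2 (prob μ (fun ω => Y ω = t)) = 0 := by
    intro t _ ht
    have hp : prob μ (fun ω => Y ω = t) = 0 := by
      unfold prob
      rw [Finset.filter_false_of_mem, Finset.sum_empty]
      intro ω _ hω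
      exact ht (Finset.mem_image.mpr ⟨X ω, Finset.mem_univ _, by rw [← h ω, hω]⟩)
    rw [hp, zero_mul]
  rw [← Finset.sum_subset (Finset.subset_univ (Finset.univ.image g)) hz,
    Finset.sum_image (fun a _ b _ hab => hg hab)]
  refine Finset.sum_congr rfl (fun s _ => ?_)
  have : prob μ (fun ω => Y ω = g s) = prob μ (fun ω => X ω = s) :=
    prob_congr μ _ _ (fun ω => by rw [h ω, hg.eq_iff])
  rw [this]

set_option synthInstance.maxSize 2000 in
set_option synthInstance.maxHeartbeats 1000000 in
set_option maxHeartbeats 2000000 in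
/-- Under the no-signaling conditions (expressed information-theoretically) and conditionally
uncorrelated inputs, the conditional total correlation of the input/output pairs reduces to
`I(AX;BY;CZ|EW) = I(A;B;C|XYZEW)`. -/
theorem total_correlation_inputs_outputs_reduction
    {Ω SA SB SC SX SY SZ SE SW : Type*} [Fintype Ω]
    [Fintype SA] [DecidableEq SA] [Fintype SB] [DecidableEq SB]
    [Fintype SC] [DecidableEq SC] [Fintype SX] [DecidableEq SX]
    [Fintype SY] [DecidableEq SY] [Fintype SZ] [DecidableEq SZ]
    [Fintype SE] [DecidableEq SE] [Fintype SW] [DecidableEq SW]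
    (μ : Ω → ℝ) (hμ : ∀ ω, 0 ≤ μ ω) (hμ1 : ∑ ω, μ ω = 1)
    (A : Ω → SA) (B : Ω → SB) (C : Ω → SC)
    (X : Ω → SX) (Y : Ω → SY) (Z : Ω → SZ) (E : Ω → SE) (W : Ω → SW)
    (hXYZ : condTotalCorr3 μ X Y Z (fun ω => (E ω, W ω)) = 0)
    (hA : condMutualInfo μ (fun ω => (Y ω, Z ω)) A (fun ω => (X ω, E ω, W ω)) = 0)
    (hB : condMutualInfo μ (fun ω => (X ω, Z ω)) B (fun ω => (Y ω, E ω, W ω)) = 0)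
    (hC : condMutualInfo μ (fun ω => (X ω, Y ω)) C (fun ω => (Z ω, E ω, W ω)) = 0) :
    condTotalCorr3 μ (fun ω => (A ω, X ω)) (fun ω => (B ω, Y ω)) (fun ω => (C ω, Z ω))
        (fun ω => (E ω, W ω))
      = condTotalCorr3 μ A B C (fun ω => (X ω, Y ω, Z ω, E ω, W ω)) := by
  simp only [condTotalCorr3, condMutualInfo, condEntropy] at hXYZ hA hB hC ⊢
  -- canonical regroupings
  have r1 : entropy μ (fun ω => ((A ω, X ω), (E ω, W ω)))
      = entropy μ (fun ω => (A ω, X ω, E ω, W ω)) :=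
    entropy_eq_of_inj μ _ _ (fun q : SA × SX × SE × SW => ((q.1, q.2.1), (q.2.2.1, q.2.2.2)))
      (Function.LeftInverse.injective (g := fun p => (p.1.1, p.1.2, p.2.1, p.2.2))
        (fun q => rfl)) (fun ω => rfl)
  have r2 : entropy μ (fun ω => ((B ω, Y ω), (E ω, W ω)))
      = entropy μ (fun ω => (B ω, Y ω, E ω, W ω)) :=
    entropy_eq_of_inj μ _ _ (fun q : SB × SY × SE × SW => ((q.1, q.2.1), (q.2.2.1, q.2.2.2)))
      (Function.LeftInverse.injective (g := fun p => (p.1.1, p.1.2, p.2.1, p.2.2))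
        (fun q => rfl)) (fun ω => rfl)
  have r3 : entropy μ (fun ω => ((C ω, Z ω), (E ω, W ω)))
      = entropy μ (fun ω => (C ω, Z ω, E ω, W ω)) :=
    entropy_eq_of_inj μ _ _ (fun q : SC × SZ × SE × SW => ((q.1, q.2.1), (q.2.2.1, q.2.2.2)))
      (Function.LeftInverse.injective (g := fun p => (p.1.1, p.1.2, p.2.1, p.2.2))
        (fun q => rfl)) (fun ω => rfl)
  have r4 : entropy μ (fun ω => (((A ω, X ω), (B ω, Y ω), (C ω, Z ω)), (E ω, W ω)))
      = entropy μ (fun ω => (A ω, B ω, C ω, X ω, Y ω, Z ω, E ω, W ω)) :=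
    entropy_eq_of_inj μ _ _
      (fun q : SA × SB × SC × SX × SY × SZ × SE × SW =>
        (((q.1, q.2.2.2.1), (q.2.1, q.2.2.2.2.1), (q.2.2.1, q.2.2.2.2.2.1)),
          (q.2.2.2.2.2.2.1, q.2.2.2.2.2.2.2)))
      (Function.LeftInverse.injective
        (g := fun p => (p.1.1.1, p.1.2.1.1, p.1.2.2.1, p.1.1.2, p.1.2.1.2, p.1.2.2.2,
          p.2.1, p.2.2)) (fun q => rfl)) (fun ω => rfl)
  have r5 : entropy μ (fun ω => ((A ω, B ω, C ω), (X ω, Y ω, Z ω, E ω, W ω)))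
      = entropy μ (fun ω => (A ω, B ω, C ω, X ω, Y ω, Z ω, E ω, W ω)) :=
    entropy_eq_of_inj μ _ _
      (fun q : SA × SB × SC × SX × SY × SZ × SE × SW =>
        ((q.1, q.2.1, q.2.2.1), q.2.2.2))
      (Function.LeftInverse.injective
        (g := fun p => (p.1.1, p.1.2.1, p.1.2.2, p.2)) (fun q => rfl)) (fun ω => rfl)
  have r6 : entropy μ (fun ω => ((X ω, Y ω, Z ω), (E ω, W ω)))
      = entropy μ (fun ω => (X ω, Y ω, Z ω, E ω, W ω)) :=
    entropy_eq_of_inj μ _ _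
      (fun q : SX × SY × SZ × SE × SW => ((q.1, q.2.1, q.2.2.1), (q.2.2.2.1, q.2.2.2.2)))
      (Function.LeftInverse.injective
        (g := fun p => (p.1.1, p.1.2.1, p.1.2.2, p.2.1, p.2.2)) (fun q => rfl)) (fun ω => rfl)
  have r7 : entropy μ (fun ω => ((Y ω, Z ω), (X ω, E ω, W ω)))
      = entropy μ (fun ω => (X ω, Y ω, Z ω, E ω, W ω)) :=
    entropy_eq_of_inj μ _ _
      (fun q : SX × SY × SZ × SE × SW => ((q.2.1, q.2.2.1), (q.1, q.2.2.2.1, q.2.2.2.2)))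
      (Function.LeftInverse.injective
        (g := fun p => (p.2.1, p.1.1, p.1.2, p.2.2.1, p.2.2.2)) (fun q => rfl)) (fun ω => rfl)
  have r8 : entropy μ (fun ω => (((Y ω, Z ω), A ω), (X ω, E ω, W ω)))
      = entropy μ (fun ω => (A ω, X ω, Y ω, Z ω, E ω, W ω)) :=
    entropy_eq_of_inj μ _ _
      (fun q : SA × SX × SY × SZ × SE × SW =>
        (((q.2.2.1, q.2.2.2.1), q.1), (q.2.1, q.2.2.2.2.1, q.2.2.2.2.2)))
      (Function.LeftInverse.injective
        (g := fun p => (p.1.2, p.2.1, p.1.1.1, p.1.1.2, p.2.2.1, p.2.2.2)) (fun q => rfl))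
      (fun ω => rfl)
  have r9 : entropy μ (fun ω => ((X ω, Z ω), (Y ω, E ω, W ω)))
      = entropy μ (fun ω => (X ω, Y ω, Z ω, E ω, W ω)) :=
    entropy_eq_of_inj μ _ _
      (fun q : SX × SY × SZ × SE × SW => ((q.1, q.2.2.1), (q.2.1, q.2.2.2.1, q.2.2.2.2)))
      (Function.LeftInverse.injective
        (g := fun p => (p.1.1, p.2.1, p.1.2, p.2.2.1, p.2.2.2)) (fun q => rfl)) (fun ω => rfl)
  have r10 : entropy μ (fun ω => (((X ω, Z ω), B ω), (Y ω, E ω, W ω)))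
      = entropy μ (fun ω => (B ω, X ω, Y ω, Z ω, E ω, W ω)) :=
    entropy_eq_of_inj μ _ _
      (fun q : SB × SX × SY × SZ × SE × SW =>
        (((q.2.1, q.2.2.2.1), q.1), (q.2.2.1, q.2.2.2.2.1, q.2.2.2.2.2)))
      (Function.LeftInverse.injective
        (g := fun p => (p.1.2, p.1.1.1, p.2.1, p.1.1.2, p.2.2.1, p.2.2.2)) (fun q => rfl))
      (fun ω => rfl)
  have r11 : entropy μ (fun ω => ((X ω, Y ω), (Z ω, E ω, W ω)))
      = entropy μ (fun ω => (X ω, Y ω, Z ω, E ω, W ω)) :=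
    entropy_eq_of_inj μ _ _
      (fun q : SX × SY × SZ × SE × SW => ((q.1, q.2.1), (q.2.2.1, q.2.2.2.1, q.2.2.2.2)))
      (Function.LeftInverse.injective
        (g := fun p => (p.1.1, p.1.2, p.2.1, p.2.2.1, p.2.2.2)) (fun q => rfl)) (fun ω => rfl)
  have r12 : entropy μ (fun ω => (((X ω, Y ω), C ω), (Z ω, E ω, W ω)))
      = entropy μ (fun ω => (C ω, X ω, Y ω, Z ω, E ω, W ω)) :=
    entropy_eq_of_inj μ _ _
      (fun q : SC × SX × SY × SZ × SE × SW =>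
        (((q.2.1, q.2.2.1), q.1), (q.2.2.2.1, q.2.2.2.2.1, q.2.2.2.2.2)))
      (Function.LeftInverse.injective
        (g := fun p => (p.1.2, p.1.1.1, p.1.1.2, p.2.1, p.2.2.1, p.2.2.2)) (fun q => rfl))
      (fun ω => rfl)
  rw [r6] at hXYZ
  rw [r7, r8] at hA
  rw [r9, r10] at hB
  rw [r11, r12] at hC
  rw [r1, r2, r3, r4, r5]
  linarith
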